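/- Every finitely generated linear group is residually finite: if G is a finitely generated subgroup of GL_n(k) for a field k, then for every nonidentity element g of G there exists a finite group Q and a homomorphism φ : G → Q with φ(g) ≠ 1 (Mal'cev's theorem). -/

import Mathlib

/-!
The entries of a finite generating set of `G` and of their inverses generate a finitely
generated subring `A` of `k`, and `G` lies in `GL_n(A)`. A finitely generated `ℤ`-algebra is a
Jacobson ring whose residue fields at maximal ideals are finite, so when it is reduced its
maximal ideals intersect in `0`. Reducing modulo a maximal ideal that avoids a nonzero entry of
`g - 1` sends `g` to a nontrivial element of the finite group `GL_n(A/m)`.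
-/

theorem Group.ResiduallyFinite.of_injective {G G' : Type*} [Group G] [Group G']
    [Group.ResiduallyFinite G'] {f : G →* G'} (hf : Function.Injective f) :
    Group.ResiduallyFinite G := by
  refine Group.residuallyFinite_iff_exists_finiteIndexNormalSubgroup.mpr fun g hg => ?_
  obtain ⟨H, hH⟩ :=
    Group.exists_finiteIndexNormalSubgroup_notMem (f g) ((map_ne_one_iff f hf).mpr hg)
  exact ⟨H.comap f, hH⟩

theorem Group.exists_monoidHom_finite_ne_one {G : Type*} [Group G] [Group.ResiduallyFinite G]
    {g : G} (hg : g ≠ 1) :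
    ∃ (Q : Type) (_ : Group Q), Finite Q ∧ ∃ φ : G →* Q, φ g ≠ 1 := by
  obtain ⟨H, hH⟩ := Group.exists_finiteIndexNormalSubgroup_notMem g hg
  refine ⟨Shrink.{0} (G ⧸ H.toSubgroup), inferInstance, inferInstance,
    Shrink.mulEquiv.symm.toMonoidHom.comp (QuotientGroup.mk' _), ?_⟩
  simpa [FiniteIndexNormalSubgroup.mem_toSubgroup_iff] using hH

instance Int.isJacobsonRing : IsJacobsonRing ℤ := by
  rw [isJacobsonRing_iff_prime_eq]
  intro P hP
  rcases eq_or_ne P ⊥ with rfl | hP₀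
  · refine le_antisymm (fun x hx => ?_) Ideal.le_jacobson
    rw [Ideal.mem_jacobson_bot] at hx
    have h₁ := Int.isUnit_iff.mp (hx 1)
    have h₂ := Int.isUnit_iff.mp (hx (-1))
    rw [Ideal.mem_bot]
    omega
  · exact le_antisymm (sInf_le ⟨le_rfl, hP.isMaximal hP₀⟩) Ideal.le_jacobson

theorem finite_of_moduleFinite_int (F : Type*) [Field F] [Module.Finite ℤ F] : Finite F := by
  by_cases hinj : Function.Injective (algebraMap ℤ F)
  · -- `ℤ` would be integrally embedded in a field, hence a field itself.
    have : Algebra.IsIntegral ℤ F := Algebra.IsIntegral.of_finite ℤ F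
    exact (Int.not_isField (isField_of_isIntegral_of_isField hinj (Field.toIsField F))).elim
  obtain ⟨m, hm, hm₀⟩ : ∃ m : ℤ, algebraMap ℤ F m = 0 ∧ m ≠ 0 := by
    rw [injective_iff_map_eq_zero] at hinj
    push Not at hinj
    exact hinj
  refine Module.finite_of_fg_torsion F fun x =>
    ⟨⟨m, mem_nonZeroDivisors_of_ne_zero hm₀⟩, ?_⟩
  simp [Submonoid.smul_def, zsmul_eq_mul, show (m : F) = 0 from hm]

theorem Ideal.finite_quotient_of_finiteType_int {R : Type*} [CommRing R]
    [Algebra.FiniteType ℤ R] (m : Ideal R) [m.IsMaximal] : Finite (R ⧸ m) := by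
  let := Ideal.Quotient.field m
  have : Algebra.FiniteType ℤ (R ⧸ m) :=
    .of_surjective (Ideal.Quotient.mkₐ ℤ m) (Ideal.Quotient.mkₐ_surjective ℤ m)
  have := finite_of_finite_type_of_isJacobsonRing ℤ (R ⧸ m)
  exact finite_of_moduleFinite_int (R ⧸ m)

namespace Matrix.GeneralLinearGroup

variable {n : Type*} [Fintype n] [DecidableEq n]

theorem map_injective {R S : Type*} [CommRing R] [CommRing S] {f : R →+* S}
    (hf : Function.Injective f) : Function.Injective (map (n := n) f) := fun x y h => by
  ext i j
  exact hf (by simpa using congr($h i j))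

theorem mem_range_map_val {R k : Type*} [CommRing R] [CommRing k] [Algebra R k]
    (A : Subalgebra R k) {x : GL n k} (hx : ∀ i j, x i j ∈ A)
    (hx' : ∀ i j, x⁻¹ i j ∈ A) : x ∈ (map (A.val : A →+* k)).range := by
  let M : Matrix n n A := fun i j => ⟨x i j, hx i j⟩
  let M' : Matrix n n A := fun i j => ⟨x⁻¹ i j, hx' i j⟩
  let ι : Matrix n n A →+* Matrix n n k := (A.val : A →+* k).mapMatrix
  have hι : Function.Injective ι := Matrix.map_injective Subtype.val_injective
  have hM : ι M = x := rfl
  have hM' : ι M' = (x⁻¹ : GL n k) := rfl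
  refine ⟨⟨M, M', hι ?_, hι ?_⟩, Units.ext rfl⟩ <;> simp [hM, hM']

theorem exists_isMaximal_map_ne_one {R : Type*} [CommRing R] [IsJacobsonRing R] [IsReduced R]
    {x : GL n R} (hx : x ≠ 1) :
    ∃ m : Ideal R, m.IsMaximal ∧ map (Ideal.Quotient.mk m) x ≠ 1 := by
  obtain ⟨i, j, hij⟩ : ∃ i j, x i j ≠ (1 : Matrix n n R) i j := by
    by_contra! h
    exact hx (Units.ext (Matrix.ext h))
  have hjac : (⊥ : Ideal R).jacobson = ⊥ := IsJacobsonRing.out' ⊥ Ideal.isRadical_bot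
  have ha : x i j - (1 : Matrix n n R) i j ∉ (⊥ : Ideal R).jacobson := by
    simpa [hjac, sub_eq_zero] using hij
  simp only [Ideal.jacobson, Ideal.mem_sInf, not_forall] at ha
  obtain ⟨m, ⟨-, hm⟩, ham⟩ := ha
  refine ⟨m, hm, fun h => ham (Ideal.Quotient.eq.mp ?_)⟩
  simpa [Matrix.one_apply, apply_ite (Ideal.Quotient.mk m)] using congr($h i j)

instance residuallyFinite_of_finiteType_int {R : Type*} [CommRing R] [IsReduced R]
    [Algebra.FiniteType ℤ R] : Group.ResiduallyFinite (GL n R) := by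
  have : IsJacobsonRing R := isJacobsonRing_of_finiteType (A := ℤ)
  refine Group.residuallyFinite_of_forall_exists_finite_monoidHom fun x hx => ?_
  obtain ⟨m, hm, hxm⟩ := exists_isMaximal_map_ne_one hx
  have := m.finite_quotient_of_finiteType_int
  exact ⟨GL n (R ⧸ m), inferInstance, inferInstance, map (Ideal.Quotient.mk m), hxm⟩

theorem exists_fg_subalgebra_le_range_map {k : Type*} [CommRing k] {G : Subgroup (GL n k)}
    (hG : G.FG) : ∃ A : Subalgebra ℤ k, A.FG ∧ G ≤ (map (A.val : A →+* k)).range := by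
  obtain ⟨S, rfl⟩ := hG
  let E : Set k := ⋃ s ∈ S, Set.range (fun p : n × n => s p.1 p.2) ∪
    Set.range (fun p : n × n => s⁻¹ p.1 p.2)
  have hE : E.Finite :=
    S.finite_toSet.biUnion fun _ _ => (Set.finite_range _).union (Set.finite_range _)
  refine ⟨Algebra.adjoin ℤ E, ⟨hE.toFinset, by simp⟩, ?_⟩
  rw [Subgroup.closure_le]
  intro s hs
  refine mem_range_map_val _ (fun i j => Algebra.subset_adjoin ?_)
    (fun i j => Algebra.subset_adjoin ?_)
  all_goals simp only [E, Set.mem_iUnion, Set.mem_union, Set.mem_range]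
  · exact ⟨s, hs, Or.inl ⟨(i, j), rfl⟩⟩
  · exact ⟨s, hs, Or.inr ⟨(i, j), rfl⟩⟩

theorem residuallyFinite_of_fg {k : Type*} [CommRing k] [IsReduced k] {G : Subgroup (GL n k)}
    (hG : G.FG) : Group.ResiduallyFinite G := by
  obtain ⟨A, hA, hGA⟩ := exists_fg_subalgebra_le_range_map hG
  have : Algebra.FiniteType ℤ A := (Subalgebra.fg_iff_finiteType A).mp hA
  have : IsReduced A := isReduced_of_injective A.val Subtype.val_injective
  let e := MonoidHom.ofInjective (map_injective (n := n) (f := (A.val : A →+* k))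
    Subtype.val_injective)
  exact Group.ResiduallyFinite.of_injective (f := e.symm.toMonoidHom.comp (Subgroup.inclusion hGA))
    (e.symm.injective.comp (Subgroup.inclusion_injective hGA))

end Matrix.GeneralLinearGroup

/-- Mal'cev: Every finitely generated linear group is residually finite:
if `G` is a finitely generated subgroup of `GL_n(k)` for a field `k`, then for every
nonidentity `g` in `G` there is a finite group `Q` and a homomorphism `φ : G → Q`
with `φ g ≠ 1`. -/
theorem stmt8 (k : Type*) [Field k] (n : ℕ) (G : Subgroup (GL (Fin n) k))
    (hfg : Group.FG G) (g : G) (hg : g ≠ 1) :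
    ∃ (Q : Type) (_ : Group Q), Finite Q ∧ ∃ φ : G →* Q, φ g ≠ 1 := by
  have := Matrix.GeneralLinearGroup.residuallyFinite_of_fg ((Group.fg_iff_subgroup_fg G).mp hfg)
  exact Group.exists_monoidHom_finite_ne_one hg
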